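/- Let A be a 5-by-5 reciprocal matrix. The Hermitian matrix Im A has a nonzero eigenvalue of algebraic multiplicity at least 2 if and only if ξ₂ξ₃ = 0 and ξ₁ + ξ₂ = ξ₃ + ξ₄ ≠ 0. (This is the criterion for the Kippenhahn curve of A to have multiple tangent lines.) -/

import Mathlib

open Matrix Polynomial

/-- A tridiagonal complex matrix with zero main diagonal whose symmetric
off-diagonal entries have pairwise products equal to one. -/
def IsReciprocal {n : ℕ} (A : Matrix (Fin n) (Fin n) ℂ) : Prop :=
  (∀ i j : Fin n, ((i : ℤ) - (j : ℤ)) ^ 2 ≠ 1 → A i j = 0) ∧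
  ∀ i j : Fin n, (j : ℕ) = (i : ℕ) + 1 → A i j * A j i = 1

/-- The Hermitian matrix `Im A = (A - A*)/(2i)`. -/
noncomputable def imPart {n : ℕ} (A : Matrix (Fin n) (Fin n) ℂ) :
    Matrix (Fin n) (Fin n) ℂ :=
  (2 * Complex.I)⁻¹ • (A - Aᴴ)

/-!
`Im A` is again tridiagonal with zero diagonal, and the product of its two entries in
positions `(j, j+1)`, `(j+1, j)` is `ξ_j`. Expanding the determinant, its characteristic
polynomial is `X (X⁴ - s X² + q)` with `s = ξ₁ + ξ₂ + ξ₃ + ξ₄` and `q = ξ₁ξ₃ + ξ₁ξ₄ + ξ₂ξ₄`.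
Writing `X⁴ - s X² + q = (X² - a)(X² - b)`, a nonzero multiple root exists iff `a = b ≠ 0`,
i.e. iff `s² = 4q` and `s ≠ 0`. Finally `s² - 4q = (ξ₁ + ξ₂ - ξ₃ - ξ₄)² + 4ξ₂ξ₃` is a sum of
two nonnegative terms.
-/

theorem charpoly_tridiagonal_fin_five {R : Type*} [CommRing R] (c₀ c₁ c₂ c₃ e₀ e₁ e₂ e₃ : R) :
    (!![0, c₀, 0, 0, 0; e₀, 0, c₁, 0, 0; 0, e₁, 0, c₂, 0; 0, 0, e₂, 0, c₃; 0, 0, 0, e₃, 0] :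
      Matrix (Fin 5) (Fin 5) R).charpoly
    = X ^ 5 - C (c₀ * e₀ + c₁ * e₁ + c₂ * e₂ + c₃ * e₃) * X ^ 3
      + C (c₀ * e₀ * (c₂ * e₂) + c₀ * e₀ * (c₃ * e₃) + c₁ * e₁ * (c₃ * e₃)) * X := by
  rw [Matrix.charpoly, Matrix.det_succ_row_zero]
  simp +decide [Fin.sum_univ_succ, Matrix.det_succ_row_zero, charmatrix_apply, Fin.succAbove]
  ring

section MultipleRoots

variable {K : Type*} [Field K] [NeZero (2 : K)]

theorem rootMultiplicity_X_sq_sub_C {μ : K} (hμ : μ ≠ 0) (a : K) [Decidable (μ ^ 2 = a)] :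
    rootMultiplicity μ (X ^ 2 - C a) = if μ ^ 2 = a then 1 else 0 := by
  split_ifs with h
  · have hfactor : (X ^ 2 - C a : K[X]) = (X - C μ) * (X + C μ) := by
      rw [← h, C_pow]; ring
    have hneg : ¬ (X + C μ).IsRoot μ := by
      simp [← two_mul, hμ, two_ne_zero]
    rw [hfactor, rootMultiplicity_mul (hfactor ▸ X_pow_sub_C_ne_zero two_pos a),
      rootMultiplicity_X_sub_C_self, rootMultiplicity_eq_zero hneg]
  · exact rootMultiplicity_eq_zero (by simpa [sub_eq_zero] using h)

variable [IsAlgClosed K]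

theorem exists_ne_zero_two_le_rootMultiplicity_X_mul_iff (a b : K) :
    (∃ μ ≠ 0, 2 ≤ rootMultiplicity μ (X * (X ^ 2 - C a) * (X ^ 2 - C b))) ↔ a = b ∧ a ≠ 0 := by
  classical
  have ha := X_pow_sub_C_ne_zero (R := K) two_pos a
  have hb := X_pow_sub_C_ne_zero (R := K) two_pos b
  constructor
  · rintro ⟨μ, hμ, hmult⟩
    rw [rootMultiplicity_mul (mul_ne_zero (mul_ne_zero X_ne_zero ha) hb),
      rootMultiplicity_mul (mul_ne_zero X_ne_zero ha),
      rootMultiplicity_eq_zero (p := X) (by simpa using hμ), rootMultiplicity_X_sq_sub_C hμ,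
      rootMultiplicity_X_sq_sub_C hμ] at hmult
    split_ifs at hmult with hμa hμb
    · exact ⟨hμa.symm.trans hμb, hμa ▸ pow_ne_zero 2 hμ⟩
    all_goals omega
  · rintro ⟨rfl, ha0⟩
    obtain ⟨μ, rfl⟩ := IsAlgClosed.exists_pow_nat_eq a two_pos
    have hμ : μ ≠ 0 := fun h => ha0 (by simp [h])
    refine ⟨μ, hμ, ?_⟩
    rw [rootMultiplicity_mul (mul_ne_zero (mul_ne_zero X_ne_zero ha) ha),
      rootMultiplicity_mul (mul_ne_zero X_ne_zero ha),
      rootMultiplicity_eq_zero (p := X) (by simpa using hμ), rootMultiplicity_X_sq_sub_C hμ,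
      if_pos rfl]

theorem exists_ne_zero_two_le_rootMultiplicity_quintic_iff (s q : K) :
    (∃ μ ≠ 0, 2 ≤ rootMultiplicity μ (X ^ 5 - C s * X ^ 3 + C q * X)) ↔
      s ^ 2 = 4 * q ∧ s ≠ 0 := by
  obtain ⟨x, hx⟩ :=
    exists_quadratic_eq_zero one_ne_zero (IsAlgClosed.exists_eq_mul_self (discrim 1 (-s) q))
  obtain ⟨a, b, rfl, rfl⟩ : ∃ a b, a + b = s ∧ a * b = q :=
    ⟨x, s - x, by ring, by linear_combination -hx⟩
  clear x hx
  have hfactor : (X ^ 5 - C (a + b) * X ^ 3 + C (a * b) * X : K[X]) =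
      X * (X ^ 2 - C a) * (X ^ 2 - C b) := by
    simp only [C_add, C_mul]; ring
  rw [hfactor, exists_ne_zero_two_le_rootMultiplicity_X_mul_iff]
  constructor
  · rintro ⟨rfl, ha⟩
    exact ⟨by ring, by rw [← two_mul]; exact mul_ne_zero two_ne_zero ha⟩
  · rintro ⟨hdisc, hs⟩
    have hab : a = b := sub_eq_zero.mp (pow_eq_zero_iff two_ne_zero |>.mp
      (by linear_combination hdisc))
    subst hab
    exact ⟨rfl, fun h => hs (by simp [h])⟩

end MultipleRoots

theorem sq_sum_eq_four_mul_and_ne_zero_iff {ξ₁ ξ₂ ξ₃ ξ₄ : ℝ} (h₂ : 0 ≤ ξ₂) (h₃ : 0 ≤ ξ₃) :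
    ((ξ₁ + ξ₂ + ξ₃ + ξ₄) ^ 2 = 4 * (ξ₁ * ξ₃ + ξ₁ * ξ₄ + ξ₂ * ξ₄) ∧ ξ₁ + ξ₂ + ξ₃ + ξ₄ ≠ 0) ↔
      (ξ₂ * ξ₃ = 0 ∧ ξ₁ + ξ₂ = ξ₃ + ξ₄ ∧ ξ₃ + ξ₄ ≠ 0) := by
  have hdisc : (ξ₁ + ξ₂ + ξ₃ + ξ₄) ^ 2 = 4 * (ξ₁ * ξ₃ + ξ₁ * ξ₄ + ξ₂ * ξ₄) ↔
      (ξ₁ + ξ₂ - ξ₃ - ξ₄) ^ 2 = 0 ∧ 4 * (ξ₂ * ξ₃) = 0 := by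
    rw [← add_eq_zero_iff_of_nonneg (sq_nonneg _) (by positivity), ← sub_eq_zero]
    constructor <;> intro h <;> linear_combination h
  rw [hdisc, pow_eq_zero_iff two_ne_zero, sub_sub, sub_eq_zero, mul_eq_zero,
    or_iff_right four_ne_zero]
  constructor
  · rintro ⟨⟨hsum, hprod⟩, hs⟩
    exact ⟨hprod, hsum, fun h => hs (by linarith)⟩
  · rintro ⟨hprod, hsum, hs⟩
    exact ⟨⟨hsum, hprod⟩, fun h => hs (by linarith)⟩

theorem sub_conj_mul_sub_conj_of_mul_eq_one {a b : ℂ} (hab : a * b = 1) :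
    (a - starRingEnd ℂ b) * (b - starRingEnd ℂ a) = -((‖a‖ - ‖b‖) ^ 2 : ℝ) := by
  have hnorm : (‖a‖ : ℂ) * ‖b‖ = 1 := by
    rw [← Complex.ofReal_mul, ← norm_mul, hab, norm_one, Complex.ofReal_one]
  have hconj : starRingEnd ℂ a * starRingEnd ℂ b = 1 := by
    rw [← map_mul, hab, map_one]
  push_cast
  linear_combination hab + hconj - Complex.mul_conj' a - Complex.mul_conj' b - 2 * hnorm

theorem imPart_apply_mul_imPart_apply {n : ℕ} {A : Matrix (Fin n) (Fin n) ℂ} {i j : Fin n}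
    (h : A i j * A j i = 1) :
    imPart A i j * imPart A j i = ((‖A i j‖ - ‖A j i‖) ^ 2 / 4 : ℝ) := by
  simp only [imPart, Matrix.smul_apply, Matrix.sub_apply, conjTranspose_apply, smul_eq_mul,
    RCLike.star_def]
  rw [mul_mul_mul_comm, sub_conj_mul_sub_conj_of_mul_eq_one h]
  have hI : (2 * Complex.I)⁻¹ * (2 * Complex.I)⁻¹ = -(1 / 4 : ℂ) := by
    rw [← mul_inv, mul_mul_mul_comm, Complex.I_mul_I]; norm_num
  rw [hI]
  push_cast
  ring

namespace IsReciprocal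

variable {n : ℕ} {A : Matrix (Fin n) (Fin n) ℂ}

theorem imPart_apply_eq_zero (hA : IsReciprocal A) {i j : Fin n}
    (h : ((i : ℤ) - (j : ℤ)) ^ 2 ≠ 1) : imPart A i j = 0 := by
  have h' : ((j : ℤ) - (i : ℤ)) ^ 2 ≠ 1 := by rwa [← neg_sub, neg_sq]
  simp [imPart, hA.1 i j h, hA.1 j i h']

theorem imPart_eq_fin_five {A : Matrix (Fin 5) (Fin 5) ℂ} (hA : IsReciprocal A) :
    imPart A = !![0, imPart A 0 1, 0, 0, 0;
      imPart A 1 0, 0, imPart A 1 2, 0, 0;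
      0, imPart A 2 1, 0, imPart A 2 3, 0;
      0, 0, imPart A 3 2, 0, imPart A 3 4;
      0, 0, 0, imPart A 4 3, 0] := by
  ext i j
  fin_cases i <;> fin_cases j <;> first | exact hA.imPart_apply_eq_zero (by decide) | rfl

end IsReciprocal

/-- For a 5-by-5 reciprocal matrix, `Im A` has a nonzero multiple eigenvalue iff
`ξ₂ξ₃ = 0` and `ξ₁ + ξ₂ = ξ₃ + ξ₄ ≠ 0`. -/
theorem imPart_multiple_eigenvalue_iff_five (A : Matrix (Fin 5) (Fin 5) ℂ) (hA : IsReciprocal A)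
    (ξ₁ ξ₂ ξ₃ ξ₄ : ℝ)
    (h1 : ξ₁ = (‖A 0 1‖ - ‖A 1 0‖) ^ 2 / 4)
    (h2 : ξ₂ = (‖A 1 2‖ - ‖A 2 1‖) ^ 2 / 4)
    (h3 : ξ₃ = (‖A 2 3‖ - ‖A 3 2‖) ^ 2 / 4)
    (h4 : ξ₄ = (‖A 3 4‖ - ‖A 4 3‖) ^ 2 / 4) :
    (∃ μ : ℂ, μ ≠ 0 ∧ 2 ≤ (imPart A).charpoly.rootMultiplicity μ) ↔
      (ξ₂ * ξ₃ = 0 ∧ ξ₁ + ξ₂ = ξ₃ + ξ₄ ∧ ξ₃ + ξ₄ ≠ 0) := by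
  have hcharpoly : (imPart A).charpoly = X ^ 5 - C ((ξ₁ + ξ₂ + ξ₃ + ξ₄ : ℝ) : ℂ) * X ^ 3
      + C ((ξ₁ * ξ₃ + ξ₁ * ξ₄ + ξ₂ * ξ₄ : ℝ) : ℂ) * X := by
    rw [hA.imPart_eq_fin_five, charpoly_tridiagonal_fin_five,
      imPart_apply_mul_imPart_apply (hA.2 0 1 rfl), imPart_apply_mul_imPart_apply (hA.2 1 2 rfl),
      imPart_apply_mul_imPart_apply (hA.2 2 3 rfl), imPart_apply_mul_imPart_apply (hA.2 3 4 rfl),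
      ← h1, ← h2, ← h3, ← h4]
    push_cast
    ring
  rw [hcharpoly, exists_ne_zero_two_le_rootMultiplicity_quintic_iff]
  have hξ₂ : 0 ≤ ξ₂ := h2 ▸ by positivity
  have hξ₃ : 0 ≤ ξ₃ := h3 ▸ by positivity
  exact_mod_cast sq_sum_eq_four_mul_and_ne_zero_iff hξ₂ hξ₃
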